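/- Let σ be an I × I matrix over ℤ/2 and define ω_{ιι'} = σ_{ιι'} + σ_{ι'ι} (mod 2). Suppose unitary operators U_ι on a Hilbert space and operators φ_{ι'} (defined on a common invariant dense domain D₀) satisfy U_ι φ_{ι'} = (−1)^{σ_{ιι'}} φ_{ι'} U_ι on D₀. Define φ'_ι = i^{σ_{ιι}} U_ι φ_ι. Then for all ι, ι' and all Φ, Ψ ∈ D₀: ⟨Φ, (φ'_ι φ'_{ι'} − (−1)^{F_ι F_{ι'}} φ'_{ι'} φ'_ι)Ψ⟩ = ⟨Φ', (φ_ι φ_{ι'} − (−1)^{F_ι F_{ι'} + ω_{ιι'}} φ_{ι'} φ_ι)Ψ⟩, where Φ' = (−1)^{σ_{ι'ι}} (−i)^{σ_{ιι} + σ_{ι'ι'}} U_ι U_{ι'} Φ and the U_ι pairwise commute. -/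
import Mathlib


open InnerProductSpace

/-- The core algebraic identity behind the Klein transformation: the transformed
fields `φ'_ι = i^{σ_{ιι}} U_ι φ_ι` satisfy the normal commutation relations in
matrix elements, with `ω_{ιι'} = σ_{ιι'} + σ_{ι'ι}`. -/
theorem klein_transformation_identity
    (E : Type*) [NormedAddCommGroup E] [InnerProductSpace ℂ E]
    (I : Type*) (φ U : I → (E →ₗ[ℂ] E)) (F : I → ℕ) (σ : I → I → ℕ)
    (hF : ∀ ι, F ι = 0 ∨ F ι = 1) (hσ : ∀ ι ι', σ ι ι' = 0 ∨ σ ι ι' = 1)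
    (hUU : ∀ ι, U ι ∘ₗ U ι = LinearMap.id)
    (hUcomm : ∀ ι ι', U ι ∘ₗ U ι' = U ι' ∘ₗ U ι)
    (hUsa : ∀ (ι) (x y : E), ⟪U ι x, y⟫_ℂ = ⟪x, U ι y⟫_ℂ)
    (hcomm : ∀ ι ι', U ι ∘ₗ φ ι' = ((-1 : ℂ) ^ (σ ι ι')) • (φ ι' ∘ₗ U ι))
    (φ' : I → (E →ₗ[ℂ] E))
    (hφ' : ∀ ι, φ' ι = (Complex.I) ^ (σ ι ι) • (U ι ∘ₗ φ ι)) :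
    ∀ (ι ι' : I) (Φ Ψ : E),
      ⟪Φ, (φ' ι ∘ₗ φ' ι' - ((-1 : ℂ) ^ (F ι * F ι')) • (φ' ι' ∘ₗ φ' ι)) Ψ⟫_ℂ =
      ⟪(((-1 : ℂ) ^ (σ ι' ι) * (-Complex.I) ^ (σ ι ι + σ ι' ι')) •
          ((U ι ∘ₗ U ι') Φ)),
        (φ ι ∘ₗ φ ι' -
          ((-1 : ℂ) ^ (F ι * F ι' + σ ι ι' + σ ι' ι)) • (φ ι' ∘ₗ φ ι)) Ψ⟫_ℂ := by
  intro ι ι' Φ Ψ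
  -- pointwise versions of the hypotheses
  have hsq : ∀ n : ℕ, ((-1 : ℂ) ^ n) * ((-1 : ℂ) ^ n) = 1 := by
    intro n; rw [← pow_add]; exact Even.neg_one_pow ⟨n, rfl⟩
  have hφU : ∀ a b (x : E), φ b (U a x) = ((-1 : ℂ) ^ (σ a b)) • U a (φ b x) := by
    intro a b x
    have h := LinearMap.ext_iff.mp (hcomm a b) x
    simp only [LinearMap.comp_apply, LinearMap.smul_apply] at h
    rw [h, smul_smul, hsq, one_smul]
  have hUc : ∀ (a b) (x : E), U a (U b x) = U b (U a x) := by
    intro a b x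
    have h := LinearMap.ext_iff.mp (hUcomm a b) x
    simpa using h
  -- move the U's in the RHS to the other side
  have hconj : (starRingEnd ℂ) ((-1 : ℂ) ^ (σ ι' ι) * (-Complex.I) ^ (σ ι ι + σ ι' ι'))
      = (-1 : ℂ) ^ (σ ι' ι) * Complex.I ^ (σ ι ι + σ ι' ι') := by
    simp [map_mul, map_pow, Complex.conj_neg_I]
  rw [inner_smul_left, hconj, LinearMap.comp_apply, hUsa, hUsa]
  rw [← inner_smul_right]
  congr 1
  -- now it is a vector identity
  simp only [LinearMap.sub_apply, LinearMap.comp_apply, LinearMap.smul_apply, hφ',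
    map_smul, map_sub, smul_sub, smul_smul, hφU]
  rw [hUc ι ι' (φ ι (φ ι' Ψ))]
  congr 2
  · ring
  · linear_combination (-((-1:ℂ)^(F ι * F ι') * Complex.I^(σ ι ι) * Complex.I^(σ ι' ι') *
      (-1:ℂ)^(σ ι ι'))) * hsq (σ ι' ι)
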